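/- arXiv:2311.18418 — 2 statements merged into one kernel-verified Lean document; each statement's English description precedes it below -/
import Mathlib

section
/- Let A, B ∈ C^{N×N} be Hermitian with A positive semidefinite and B positive definite, and let v ∈ C^N. For λ ≥ 0 define φ(λ) = (A + λ B)^{-1} v (well-defined since A + λB is positive definite for λ > 0, and assume A + λB invertible for λ = 0 as well, e.g. A positive definite). Then the function g(λ) = φ(λ)^H B φ(λ) is non-increasing in λ on [0, ∞). -/
open Matrix BigOperators ComplexOrder

/-!
Put `M = A + l₁ • B`, `δ = l₂ - l₁` and `w = φ l₂ = (M + δ • B)⁻¹ v`. The resolvent identity gives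
`φ l₁ = M⁻¹ v = w + δ • M⁻¹ (B w)`, and expanding the `B`-quadratic form,
`g l₁ = g l₂ + 2 δ (B w)ᴴ M⁻¹ (B w) + δ² ‖M⁻¹ B w‖²_B`, where both correction terms are
nonnegative because `M⁻¹` and `B` are positive (semi)definite.
-/

namespace Matrix

variable {n 𝕜 : Type*} [Fintype n] [RCLike 𝕜]

lemma IsHermitian.re_dotProduct_mulVec_add_smul {B : Matrix n n 𝕜} (hB : B.IsHermitian)
    (w z : n → 𝕜) (δ : ℝ) :
    RCLike.re (star (w + δ • z) ⬝ᵥ (B *ᵥ (w + δ • z))) =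
      RCLike.re (star w ⬝ᵥ (B *ᵥ w)) + 2 * δ * RCLike.re (star z ⬝ᵥ (B *ᵥ w)) +
        δ ^ 2 * RCLike.re (star z ⬝ᵥ (B *ᵥ z)) := by
  have hcross : star w ⬝ᵥ (B *ᵥ z) = star (star z ⬝ᵥ (B *ᵥ w)) := by
    rw [star_dotProduct, star_mulVec, hB.eq, dotProduct_mulVec]
  simp only [mulVec_add, mulVec_smul, star_add, star_smul, star_trivial, dotProduct_add,
    add_dotProduct, dotProduct_smul, smul_dotProduct, hcross, map_add, RCLike.smul_re,
    RCLike.star_def, RCLike.conj_re]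
  ring

variable [DecidableEq n]

lemma inv_mulVec_eq_inv_add_smul_mulVec_add {M B : Matrix n n 𝕜} {δ : ℝ}
    (hM : IsUnit M.det) (hMB : IsUnit (M + δ • B).det) (v : n → 𝕜) :
    M⁻¹ *ᵥ v = (M + δ • B)⁻¹ *ᵥ v + δ • (M⁻¹ *ᵥ (B *ᵥ ((M + δ • B)⁻¹ *ᵥ v))) := by
  set w := (M + δ • B)⁻¹ *ᵥ v
  have hv : v = M *ᵥ w + δ • (B *ᵥ w) := by
    rw [← smul_mulVec, ← add_mulVec, mulVec_mulVec, mul_nonsing_inv _ hMB, one_mulVec]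
  rw [hv, mulVec_add, mulVec_smul, mulVec_mulVec, nonsing_inv_mul _ hM, one_mulVec]

lemma PosDef.re_dotProduct_mulVec_inv_add_smul_le {M B : Matrix n n 𝕜} (hM : M.PosDef)
    (hB : B.PosSemidef) {δ : ℝ} (hδ : 0 ≤ δ) (v : n → 𝕜) :
    RCLike.re (star ((M + δ • B)⁻¹ *ᵥ v) ⬝ᵥ (B *ᵥ ((M + δ • B)⁻¹ *ᵥ v))) ≤
      RCLike.re (star (M⁻¹ *ᵥ v) ⬝ᵥ (B *ᵥ (M⁻¹ *ᵥ v))) := by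
  have hMB : (M + δ • B).PosDef := hM.add_posSemidef (hB.smul hδ)
  have hcross (y : n → 𝕜) : star (M⁻¹ *ᵥ y) ⬝ᵥ y = star y ⬝ᵥ (M⁻¹ *ᵥ y) := by
    rw [star_mulVec, hM.inv.isHermitian.eq, ← dotProduct_mulVec]
  rw [inv_mulVec_eq_inv_add_smul_mulVec_add ((isUnit_iff_isUnit_det _).1 hM.isUnit)
      ((isUnit_iff_isUnit_det _).1 hMB.isUnit) v,
    hB.isHermitian.re_dotProduct_mulVec_add_smul, hcross, add_assoc]
  exact le_add_of_nonneg_right <| add_nonneg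
    (mul_nonneg (mul_nonneg zero_le_two hδ) (hM.inv.posSemidef.re_dotProduct_nonneg _))
    (mul_nonneg (pow_nonneg hδ 2) (hB.re_dotProduct_nonneg _))

end Matrix

/-- g(λ) = φ(λ)ᴴ B φ(λ) with φ(λ) = (A + λB)⁻¹ v is
non-increasing on [0, ∞), for A ≻ 0 and B ≻ 0 Hermitian. -/
theorem power_fn_antitone
    (N : ℕ) (A B : Matrix (Fin N) (Fin N) ℂ)
    (hA : A.PosDef) (hB : B.PosDef) (v : Fin N → ℂ)
    (φ : ℝ → (Fin N → ℂ))
    (hφ : ∀ l : ℝ, φ l = (A + (l : ℂ) • B)⁻¹ *ᵥ v)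
    (g : ℝ → ℝ)
    (hg : ∀ l : ℝ, g l = (star (φ l) ⬝ᵥ (B *ᵥ φ l)).re) :
    ∀ l₁ l₂ : ℝ, 0 ≤ l₁ → l₁ ≤ l₂ → g l₂ ≤ g l₁ := by
  intro l₁ l₂ hl₁ hl₁₂
  have hM : (A + l₁ • B).PosDef := hA.add_posSemidef (hB.posSemidef.smul hl₁)
  have hsplit : A + (l₂ : ℂ) • B = A + l₁ • B + (l₂ - l₁) • B := by
    rw [Complex.coe_smul, add_assoc, ← add_smul, add_sub_cancel]
  rw [hg, hg, hφ, hφ, hsplit, Complex.coe_smul]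
  exact hM.re_dotProduct_mulVec_inv_add_smul_le hB.posSemidef (sub_nonneg.2 hl₁₂) v
end

section
/- Let A ⪰ 0 and B ≻ 0 be Hermitian matrices in C^{N×N} with A + λB invertible for all λ ≥ 0, let v ∈ C^N, and P_r > 0. If λ ≥ sqrt(v^H B^{-1} v / P_r), then φ(λ) = (A + λB)^{-1} v satisfies φ(λ)^H B φ(λ) ≤ P_r. -/
/-!
Put `φ = (A + λB)⁻¹ v`. Then `Re φᴴv = φᴴAφ + λ φᴴBφ ≥ λ φᴴBφ`, and expanding
`0 ≤ (λφ - B⁻¹v)ᴴ B (λφ - B⁻¹v)` gives `2λ Re φᴴv ≤ λ² φᴴBφ + vᴴB⁻¹v`; together,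
`λ² φᴴBφ ≤ vᴴB⁻¹v ≤ λ² P_r`. For `λ > 0` the matrix `A + λB` is positive definite, hence
invertible; for `λ = 0` the hypothesis forces `vᴴB⁻¹v = 0`, so `v = 0` and `φ = 0`.
-/

open Matrix ComplexOrder

namespace Matrix

theorem mulVec_nonsing_inv_mulVec {n R : Type*} [Fintype n] [DecidableEq n] [CommRing R]
    {M : Matrix n n R} (hM : IsUnit M) (v : n → R) : M *ᵥ (M⁻¹ *ᵥ v) = v := by
  rw [mulVec_mulVec, mul_nonsing_inv _ (M.isUnit_iff_isUnit_det.mp hM), one_mulVec]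

variable {n 𝕜 : Type*} [Fintype n] [RCLike 𝕜]

theorem PosSemidef.two_mul_re_dotProduct_mulVec_le {B : Matrix n n 𝕜} (hB : B.PosSemidef)
    (u y : n → 𝕜) (s : ℝ) :
    2 * s * RCLike.re (star u ⬝ᵥ B *ᵥ y) ≤
      s ^ 2 * RCLike.re (star u ⬝ᵥ B *ᵥ u) + RCLike.re (star y ⬝ᵥ B *ᵥ y) := by
  have hsymm : RCLike.re (star y ⬝ᵥ B *ᵥ u) = RCLike.re (star u ⬝ᵥ B *ᵥ y) := by
    rw [star_dotProduct, star_mulVec, hB.isHermitian.eq, ← dotProduct_mulVec, RCLike.star_def,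
      RCLike.conj_re]
  have hexpand := hB.re_dotProduct_nonneg (s • u - y)
  simp only [star_sub, star_smul, star_trivial, mulVec_sub, mulVec_smul, sub_dotProduct,
    dotProduct_sub, smul_dotProduct, dotProduct_smul, map_sub, RCLike.smul_re, hsymm] at hexpand
  nlinarith

theorem PosSemidef.sq_mul_re_dotProduct_mulVec_le_of_add_smul_mulVec_eq [DecidableEq n]
    {A B : Matrix n n 𝕜} (hA : A.PosSemidef) (hB : B.PosDef) {l : ℝ} (hl : 0 ≤ l)
    {φ v : n → 𝕜} (hφ : (A + (l : 𝕜) • B) *ᵥ φ = v) :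
    l ^ 2 * RCLike.re (star φ ⬝ᵥ B *ᵥ φ) ≤ RCLike.re (star v ⬝ᵥ B⁻¹ *ᵥ v) := by
  have hsplit : l * RCLike.re (star φ ⬝ᵥ B *ᵥ φ) ≤ RCLike.re (star φ ⬝ᵥ v) := by
    rw [← hφ, add_mulVec, smul_mulVec, dotProduct_add, dotProduct_smul, map_add, smul_eq_mul,
      RCLike.re_ofReal_mul]
    linarith [hA.re_dotProduct_nonneg φ]
  have hBinv : star (B⁻¹ *ᵥ v) ⬝ᵥ v = star v ⬝ᵥ B⁻¹ *ᵥ v := by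
    rw [star_mulVec, ← dotProduct_mulVec, hB.isHermitian.inv.eq]
  have hexpand := hB.posSemidef.two_mul_re_dotProduct_mulVec_le φ (B⁻¹ *ᵥ v) l
  rw [mulVec_nonsing_inv_mulVec hB.isUnit, hBinv] at hexpand
  nlinarith [mul_le_mul_of_nonneg_left hsplit hl]

end Matrix

theorem lagrange_multiplier_upper_bound_general
    (N : ℕ) (A B : Matrix (Fin N) (Fin N) ℂ)
    (hA : A.PosSemidef) (hB : B.PosDef)
    (v : Fin N → ℂ) (Pr : ℝ) (hPr : 0 < Pr)
    (l : ℝ) (hl : Real.sqrt ((star v ⬝ᵥ (B⁻¹ *ᵥ v)).re / Pr) ≤ l) :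
    (star ((A + (l : ℂ) • B)⁻¹ *ᵥ v) ⬝ᵥ (B *ᵥ ((A + (l : ℂ) • B)⁻¹ *ᵥ v))).re ≤ Pr := by
  obtain ⟨hl0, hlsq⟩ := Real.sqrt_le_iff.mp hl
  have hv : (star v ⬝ᵥ (B⁻¹ *ᵥ v)).re ≤ l ^ 2 * Pr := (div_le_iff₀ hPr).mp hlsq
  rcases hl0.eq_or_lt with rfl | hlpos
  · have hv0 : v = 0 := by
      by_contra hv0
      exact (hB.inv.re_dotProduct_pos hv0).not_ge (by simpa using hv)
    simp [hv0, hPr.le]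
  · have hM : (A + (l : ℂ) • B).PosDef :=
      PosDef.posSemidef_add hA (hB.smul (by exact_mod_cast hlpos))
    have hbound := hA.sq_mul_re_dotProduct_mulVec_le_of_add_smul_mulVec_eq hB hl0
      (mulVec_nonsing_inv_mulVec hM.isUnit v)
    exact le_of_mul_le_mul_left (hbound.trans hv) (by positivity)

/-- If λ ≥ sqrt(vᴴ B⁻¹ v / P_r) then φ(λ) = (A+λB)⁻¹ v satisfies
the power constraint φ(λ)ᴴ B φ(λ) ≤ P_r. -/
theorem lagrange_multiplier_upper_bound
    (N : ℕ) (A B : Matrix (Fin N) (Fin N) ℂ)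
    (hA : A.PosSemidef) (hB : B.PosDef)
    (hInv : ∀ l : ℝ, 0 ≤ l → IsUnit (A + (l : ℂ) • B))
    (v : Fin N → ℂ) (Pr : ℝ) (hPr : 0 < Pr)
    (l : ℝ) (hl : Real.sqrt ((star v ⬝ᵥ (B⁻¹ *ᵥ v)).re / Pr) ≤ l) :
    (star ((A + (l : ℂ) • B)⁻¹ *ᵥ v) ⬝ᵥ (B *ᵥ ((A + (l : ℂ) • B)⁻¹ *ᵥ v))).re ≤ Pr :=
  lagrange_multiplier_upper_bound_general N A B hA hB v Pr hPr l hl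
end
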